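/- The ordinal σ-stratified semantics does not satisfy Void Precedence* for any of the semantics σ ∈ {complete, grounded, preferred, stable, semi-stable}: for the framework AF with arguments {A, B, C} and attacks A → C and C → B, every σ-stratified labeling S of AF satisfies S(A) = S(B) = 0 and S(C) = 1, although A is unattacked and B is attacked; in particular, S(A) < S(B) fails. -/
import Mathlib


/-- Labels for arguments: in, out, undecided. -/
inductive Lab : Type where
  | argIn | argOut | argUndec
  deriving DecidableEq

/-- The set of arguments in `C` labeled `in` by `L`. -/
def inSet {α : Type*} (C : Set α) (L : α → Lab) : Set α := {a ∈ C | L a = Lab.argIn}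

/-- The set of arguments in `C` labeled `undec` by `L`. -/
def undecSet {α : Type*} (C : Set α) (L : α → Lab) : Set α := {a ∈ C | L a = Lab.argUndec}

/-- `L` is a complete labeling of the subframework of `att` on the set `C` of arguments. -/
def IsCompleteLab {α : Type*} (att : α → α → Prop) (C : Set α) (L : α → Lab) : Prop :=
  (∀ a ∈ C, L a = Lab.argOut → ∃ b ∈ C, L b = Lab.argIn ∧ att b a) ∧
  (∀ a ∈ C, L a = Lab.argIn → ∀ b ∈ C, att b a → L b = Lab.argOut) ∧
  (∀ a ∈ C, L a = Lab.argUndec →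
    (∀ b ∈ C, att b a → L b ≠ Lab.argIn) ∧ (∃ b ∈ C, att b a ∧ L b ≠ Lab.argOut))

/-- The five semantics considered. -/
inductive Sem : Type where
  | complete | grounded | preferred | stable | semiStable

/-- `SemLab σ att C L` : `L` is a `σ`-labeling of the subframework of `att` on `C`. -/
def SemLab {α : Type*} : Sem → (α → α → Prop) → Set α → (α → Lab) → Prop
  | Sem.complete, att, C, L => IsCompleteLab att C L
  | Sem.grounded, att, C, L => IsCompleteLab att C L ∧
      ∀ L', IsCompleteLab att C L' → inSet C L' ⊆ inSet C L → inSet C L ⊆ inSet C L'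
  | Sem.preferred, att, C, L => IsCompleteLab att C L ∧
      ∀ L', IsCompleteLab att C L' → inSet C L ⊆ inSet C L' → inSet C L' ⊆ inSet C L
  | Sem.stable, att, C, L => IsCompleteLab att C L ∧ undecSet C L = ∅
  | Sem.semiStable, att, C, L => IsCompleteLab att C L ∧
      ∀ L', IsCompleteLab att C L' → undecSet C L' ⊆ undecSet C L → undecSet C L ⊆ undecSet C L'

/-- `Stratified σ att C S` : `S` is a `σ`-stratified labeling of the subframework of `att`
on the set `C` of arguments (values of `S` outside `C` are irrelevant). -/
inductive Stratified {α : Type*} (σ : Sem) (att : α → α → Prop) : Set α → (α → ℕ∞) → Prop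
  | ofEmpty {C : Set α} {S : α → ℕ∞} (L : α → Lab)
      (hL : SemLab σ att C L) (hin : inSet C L = ∅)
      (hS : ∀ a ∈ C, S a = ⊤) : Stratified σ att C S
  | ofStep {C : Set α} {S : α → ℕ∞} (L : α → Lab) (S' : α → ℕ∞)
      (hL : SemLab σ att C L) (hin : (inSet C L).Nonempty)
      (hS' : Stratified σ att (C \ inSet C L) S')
      (h0 : ∀ a ∈ inSet C L, S a = 0)
      (h1 : ∀ a ∈ C \ inSet C L, S a = 1 + S' a) :
      Stratified σ att C S

def myatt : Fin 3 → Fin 3 → Prop := fun X Y => (X = 0 ∧ Y = 2) ∨ (X = 2 ∧ Y = 1)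

lemma semlab_complete {α : Type*} {σ : Sem} {att : α → α → Prop} {C : Set α} {L : α → Lab}
    (h : SemLab σ att C L) : IsCompleteLab att C L := by
  cases σ <;> first | exact h | exact h.1

lemma lab_cases (l : Lab) : l = Lab.argIn ∨ l = Lab.argOut ∨ l = Lab.argUndec := by
  cases l <;> simp

/-- On the full framework, the unique complete labeling is 0:in, 1:in, 2:out. -/
lemma completeLab_univ {L : Fin 3 → Lab} (h : IsCompleteLab myatt Set.univ L) :
    L 0 = Lab.argIn ∧ L 1 = Lab.argIn ∧ L 2 = Lab.argOut := by
  obtain ⟨hout, hin, hund⟩ := h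
  have h0 : L 0 = Lab.argIn := by
    rcases lab_cases (L 0) with h | h | h
    · exact h
    · obtain ⟨b, -, -, hb⟩ := hout 0 trivial h
      rcases hb with ⟨-, hb⟩ | ⟨-, hb⟩ <;> exact absurd hb (by decide)
    · obtain ⟨b, -, hb, -⟩ := (hund 0 trivial h).2
      rcases hb with ⟨-, hb⟩ | ⟨-, hb⟩ <;> exact absurd hb (by decide)
  have h2 : L 2 = Lab.argOut := by
    rcases lab_cases (L 2) with h | h | h
    · have := hin 2 trivial h 0 trivial (Or.inl ⟨rfl, rfl⟩)
      rw [h0] at this; exact absurd this (by decide)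
    · exact h
    · have := (hund 2 trivial h).1 0 trivial (Or.inl ⟨rfl, rfl⟩)
      exact absurd h0 this
  have h1 : L 1 = Lab.argIn := by
    rcases lab_cases (L 1) with h | h | h
    · exact h
    · obtain ⟨b, -, hbin, hb⟩ := hout 1 trivial h
      rcases hb with ⟨-, hb⟩ | ⟨hb, -⟩
      · exact absurd hb (by decide)
      · rw [hb] at hbin; rw [h2] at hbin; exact absurd hbin (by decide)
    · obtain ⟨b, -, hb, hbo⟩ := (hund 1 trivial h).2
      rcases hb with ⟨-, hb⟩ | ⟨hb, -⟩
      · exact absurd hb (by decide)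
      · rw [hb] at hbo; exact absurd h2 hbo
  exact ⟨h0, h1, h2⟩

/-- On any subframework containing 2 but not 0, a complete labeling puts 2 in. -/
lemma completeLab_sub {C : Set (Fin 3)} {L : Fin 3 → Lab} (h2 : (2 : Fin 3) ∈ C)
    (h0 : (0 : Fin 3) ∉ C) (h : IsCompleteLab myatt C L) : L 2 = Lab.argIn := by
  obtain ⟨hout, -, hund⟩ := h
  rcases lab_cases (L 2) with h | h | h
  · exact h
  · obtain ⟨b, hbC, -, hb⟩ := hout 2 h2 h
    rcases hb with ⟨hb, -⟩ | ⟨-, hb⟩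
    · rw [hb] at hbC; exact absurd hbC h0
    · exact absurd hb (by decide)
  · obtain ⟨b, hbC, hb, -⟩ := (hund 2 h2 h).2
    rcases hb with ⟨hb, -⟩ | ⟨-, hb⟩
    · rw [hb] at hbC; exact absurd hbC h0
    · exact absurd hb (by decide)

/-- Void Precedence* fails for every semantics `σ`: in the framework with
arguments `{A, B, C} = {0, 1, 2}` and attacks `A → C` and `C → B`, argument `A = 0` is
unattacked and `B = 1` is attacked, yet every `σ`-stratified labeling `S` satisfies
`S A = S B = 0` and `S C = 1`; in particular `S A < S B` fails. -/
theorem void_precedence_fails :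
    let att : Fin 3 → Fin 3 → Prop := fun X Y => (X = 0 ∧ Y = 2) ∨ (X = 2 ∧ Y = 1)
    (∀ X : Fin 3, ¬ att X 0) ∧ (∃ X : Fin 3, att X 1) ∧
    ∀ (σ : Sem) (S : Fin 3 → ℕ∞), Stratified σ att Set.univ S →
      S 0 = 0 ∧ S 1 = 0 ∧ S 2 = 1 ∧ ¬ S 0 < S 1 := by
  intro att
  have hatt : att = myatt := rfl
  refine ⟨?_, ⟨2, Or.inr ⟨rfl, rfl⟩⟩, ?_⟩
  · intro X hX
    rw [hatt] at hX
    rcases hX with ⟨-, h⟩ | ⟨-, h⟩ <;> exact absurd h (by decide)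
  · intro σ S hS
    rw [hatt] at hS
    cases hS with
    | ofEmpty L hL hin hSt =>
        have hc := completeLab_univ (semlab_complete hL)
        have : (0 : Fin 3) ∈ inSet Set.univ L := ⟨trivial, hc.1⟩
        rw [hin] at this; exact absurd this (Set.notMem_empty _)
    | ofStep L S' hL hin hS' h0 h1 =>
        have hc := completeLab_univ (semlab_complete hL)
        have hS0 : S 0 = 0 := h0 0 ⟨trivial, hc.1⟩
        have hS1 : S 1 = 0 := h0 1 ⟨trivial, hc.2.1⟩
        have h2mem : (2 : Fin 3) ∈ Set.univ \ inSet Set.univ L := by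
          refine ⟨trivial, fun h => ?_⟩
          rw [h.2] at hc; exact absurd hc.2.2 (by decide)
        have h0mem : (0 : Fin 3) ∉ Set.univ \ inSet Set.univ L := by
          intro h; exact h.2 ⟨trivial, hc.1⟩
        have hS2 : S 2 = 1 := by
          rw [h1 2 h2mem]
          cases hS' with
          | ofEmpty L' hL' hin' hSt' =>
              have := completeLab_sub h2mem h0mem (semlab_complete hL')
              have hm : (2 : Fin 3) ∈ inSet (Set.univ \ inSet Set.univ L) L' :=
                ⟨h2mem, this⟩
              rw [hin'] at hm; exact absurd hm (Set.notMem_empty _)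
          | ofStep L' S'' hL' hin' hS'' h0' h1' =>
              have := completeLab_sub h2mem h0mem (semlab_complete hL')
              rw [h0' 2 ⟨h2mem, this⟩]; rfl
        exact ⟨hS0, hS1, hS2, by rw [hS0, hS1]; exact lt_irrefl _⟩
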